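/- arXiv:1805.03413 — 3 statements merged into one kernel-verified Lean document; each statement's English description precedes it below -/
import Mathlib

section
/- Let L be a language of words over an alphabet A containing the empty word, ordered by α ≤ β iff β is a prefix of α (reverse prefix order). Then the Hasse diagram of this poset is a tree rooted at the empty word; equivalently, the comparability graph given by the covering relation is connected and acyclic. -/
/-- In the reverse prefix order on `L` (where `α ≤ β` iff `β` is a prefix of `α`),
`β` covers `α` (written `hasseCover L α β`, an edge of the Hasse diagram) if `β` is a proper
prefix of `α` and no element of `L` lies strictly between them in the prefix order. -/
def hasseCover {A : Type*} (L : Set (List A)) (α β : L) : Prop :=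
  (β : List A) <+: (α : List A) ∧ α ≠ β ∧
    ∀ γ : L, (β : List A) <+: (γ : List A) → (γ : List A) <+: (α : List A) → γ = β ∨ γ = α

/-- The Hasse diagram: the simple graph on `L` whose edges are the covering pairs. -/
def hasseDiagram {A : Type*} (L : Set (List A)) : SimpleGraph L :=
  SimpleGraph.fromRel (hasseCover L)

/-!
Every nonempty word `v ∈ L` has exactly one cover, its longest proper prefix in `L`; covers
are strictly shorter, so following them leads from every vertex down to the root `[]`, and
the diagram is connected. The prefixes of a word form a chain, so an edge of the diagram
leaving the cone `{x | α <+: x}` must be the edge from `α` to its cover `β`. Hence, once that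
edge is deleted, `β` cannot be reached from `α`: every edge is a bridge, and the diagram is
acyclic.
-/

theorem SimpleGraph.Reachable.of_forall_adj {V : Type*} {G : SimpleGraph V} {P : V → Prop}
    (hP : ∀ ⦃u v⦄, G.Adj u v → P u → P v) {u v : V} (huv : G.Reachable u v) (hu : P u) :
    P v := by
  rw [SimpleGraph.reachable_iff_reflTransGen] at huv
  induction huv with
  | refl => exact hu
  | tail _ hadj ih => exact hP hadj ih

namespace hasseCover

variable {A : Type*} {L : Set (List A)} {α β : L}

theorem length_lt (hc : hasseCover L α β) : (β : List A).length < (α : List A).length :=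
  lt_of_le_of_ne hc.1.length_le fun hlen =>
    hc.2.1 (Subtype.ext (hc.1.eq_of_length hlen)).symm

theorem unique {γ : L} (hβ : hasseCover L α β) (hγ : hasseCover L α γ) : β = γ := by
  rcases List.prefix_or_prefix_of_prefix hβ.1 hγ.1 with hβγ | hγβ
  · exact (hβ.2.2 γ hβγ hγ.1).resolve_right hγ.2.1.symm |>.symm
  · exact (hγ.2.2 β hγβ hβ.1).resolve_right hβ.2.1.symm

end hasseCover

section

variable {A : Type*} {L : Set (List A)}

theorem exists_hasseCover (h : [] ∈ L) (v : L) (hv : (v : List A) ≠ []) :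
    ∃ β : L, hasseCover L v β := by
  let s : Set (List A) := {β | β ∈ L ∧ β <+: (v : List A) ∧ β ≠ (v : List A)}
  have hs : s.Finite :=
    (v : List A).inits.finite_toSet.subset fun β hβ => List.mem_inits _ _ |>.2 hβ.2.1
  obtain ⟨β, ⟨hβL, hβv, hβne⟩, hβmax⟩ :=
    hs.exists_maximalFor List.length s ⟨[], h, List.nil_prefix, hv.symm⟩
  refine ⟨⟨β, hβL⟩, hβv, fun hvβ => hβne (congrArg Subtype.val hvβ).symm, fun γ hβγ hγv => ?_⟩
  by_cases hγ : (γ : List A) = v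
  · exact Or.inr (Subtype.ext hγ)
  · exact Or.inl (Subtype.ext (hβγ.eq_of_length_le (hβmax ⟨γ.2, hγv, hγ⟩ hβγ.length_le)).symm)

theorem hasseDiagram_adj {v w : L} :
    (hasseDiagram L).Adj v w ↔ hasseCover L v w ∨ hasseCover L w v := by
  rw [hasseDiagram, SimpleGraph.fromRel_adj, and_iff_right_of_imp]
  rintro (hc | hc)
  exacts [hc.2.1, hc.2.1.symm]

theorem hasseDiagram_reachable_nil (h : [] ∈ L) (v : L) :
    (hasseDiagram L).Reachable v ⟨[], h⟩ := by
  by_cases hv : (v : List A) = []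
  · rw [show v = ⟨[], h⟩ from Subtype.ext hv]
  · obtain ⟨β, hβ⟩ := exists_hasseCover h v hv
    exact (hasseDiagram_adj.2 (Or.inl hβ)).reachable.trans (hasseDiagram_reachable_nil h β)
termination_by (v : List A).length
decreasing_by exact hβ.length_lt

theorem hasseCover.edge_eq_of_adj_of_prefix {α β x z : L} (hc : hasseCover L α β)
    (hxz : (hasseDiagram L).Adj x z) (hx : (α : List A) <+: x) (hz : ¬ (α : List A) <+: z) :
    s(x, z) = s(α, β) := by
  rcases hasseDiagram_adj.1 hxz with hxz | hzx
  · have hzα : (z : List A) <+: α :=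
      (List.prefix_or_prefix_of_prefix hxz.1 hx).resolve_right hz
    obtain rfl : α = x :=
      (hxz.2.2 α hzα hx).resolve_left fun hαz => hz (hαz ▸ List.prefix_refl _)
    rw [hxz.unique hc]
  · exact absurd (hx.trans hzx.1) hz

theorem hasseCover.isBridge {α β : L} (hc : hasseCover L α β) :
    (hasseDiagram L).IsBridge s(α, β) := by
  rw [SimpleGraph.isBridge_iff]
  intro hreach
  have hαβ : (α : List A) <+: β := by
    refine hreach.of_forall_adj (P := fun x : L => (α : List A) <+: x) ?_ (List.prefix_refl _)
    intro x z hxz hx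
    rw [SimpleGraph.deleteEdges_adj, Set.mem_singleton_iff] at hxz
    by_contra hz
    exact hxz.2 (hc.edge_eq_of_adj_of_prefix hxz.1 hx hz)
  exact (hc.length_lt.trans_le hαβ.length_le).false

end

/-- If `L` is a language containing the empty word, then the Hasse diagram of the reverse
prefix order on `L` is a tree (connected and acyclic). -/
theorem hasseDiagram_isTree {A : Type*} (L : Set (List A)) (h : [] ∈ L) :
    (hasseDiagram L).IsTree := by
  refine ⟨(SimpleGraph.connected_iff_exists_forall_reachable _).2
    ⟨⟨[], h⟩, fun v => (hasseDiagram_reachable_nil h v).symm⟩, ?_⟩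
  rw [SimpleGraph.isAcyclic_iff_forall_adj_isBridge]
  intro v w hvw
  rcases hasseDiagram_adj.1 hvw with hc | hc
  · exact hc.isBridge
  · exact Sym2.eq_swap ▸ hc.isBridge
end

section
/- Let M be a monoid, X a left M-set, and E the set of (directed) edges and V the set of vertices of an M-graph, with M-equivariant incidence maps ι, τ : E → V. The graph is a forest (has no cycles) if and only if the Z-linear boundary map ∂ : Z[E] → Z[V], defined by ∂(e) = τ(e) − ι(e), is injective. -/
section

variable {E V : Type*} (ι τ : E → V)

/-- The boundary map `∂ : ℤ[E] → ℤ[V]`, `∂(e) = τ(e) − ι(e)`, on free abelian groups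
(realised as finitely supported functions to `ℤ`). -/
noncomputable def boundaryMap : (E →₀ ℤ) →ₗ[ℤ] (V →₀ ℤ) :=
  Finsupp.linearCombination ℤ (fun e => Finsupp.single (τ e) 1 - Finsupp.single (ι e) 1)

/-- A circuit (cycle) in the undirected multigraph underlying `(V, E, ι, τ)`: a nonempty
closed walk, traversing edge `e i` in direction `d i` from vertex `v i` to `v (i+1)`,
with no backtracking (cyclically). -/
def IsCircuit (n : ℕ) (e : ℕ → E) (d : ℕ → Bool) (v : ℕ → V) : Prop :=
  0 < n ∧ v n = v 0 ∧
  (∀ i < n, (if d i then ι (e i) else τ (e i)) = v i ∧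
            (if d i then τ (e i) else ι (e i)) = v (i + 1)) ∧
  (∀ i, i + 1 < n → ¬(e (i + 1) = e i ∧ d (i + 1) = !d i)) ∧
  ¬(e 0 = e (n - 1) ∧ d 0 = !d (n - 1))

lemma boundary_apply [DecidableEq V] (x : E →₀ ℤ) (w : V) :
    boundaryMap ι τ x w =
      ∑ f ∈ x.support, x f * ((if τ f = w then 1 else 0) - (if ι f = w then 1 else 0)) := by
  classical
  rw [boundaryMap, Finsupp.linearCombination_apply, Finsupp.sum, Finsupp.finset_sum_apply]
  refine Finset.sum_congr rfl fun f _ => ?_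
  simp [Finsupp.single_apply, mul_sub, mul_ite]

lemma exists_circuit_of_ker (x : E →₀ ℤ) (hx : x ≠ 0)
    (h0 : boundaryMap ι τ x = 0) :
    ∃ n e d v, IsCircuit ι τ n e d v := by
  classical
  set startV : E → V := fun f => if 0 < x f then ι f else τ f with hstartV
  set endV : E → V := fun f => if 0 < x f then τ f else ι f with hendV
  have key : ∀ g, x g ≠ 0 → ∃ f, x f ≠ 0 ∧ startV f = endV g := by
    intro g hg
    by_contra hno
    push_neg at hno
    set w := endV g with hw
    have hzero : boundaryMap ι τ x w = 0 := by rw [h0]; rfl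
    rw [boundary_apply] at hzero
    have hterm : ∀ f ∈ x.support,
        (0:ℤ) ≤ x f * ((if τ f = w then 1 else 0) - (if ι f = w then 1 else 0)) := by
      intro f hf
      have hf' : x f ≠ 0 := Finsupp.mem_support_iff.mp hf
      have hs := hno f hf'
      rcases hf'.lt_or_gt with hneg | hpos
      · have hτ : τ f ≠ w := by
          simpa [hstartV, not_lt.mpr hneg.le] using hs
        by_cases hι : ι f = w <;> simp [hτ, hι] <;> nlinarith
      · have hι : ι f ≠ w := by
          simpa [hstartV, hpos] using hs
        by_cases hτ : τ f = w <;> simp [hτ, hι] <;> positivity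
    have hgpos : (0:ℤ) < x g * ((if τ g = w then 1 else 0) - (if ι g = w then 1 else 0)) := by
      have hsg := hno g hg
      rcases hg.lt_or_gt with hneg | hpos
      · have hι : ι g = w := by simp [hw, hendV, not_lt.mpr hneg.le]
        have hτ : τ g ≠ w := by simpa [hstartV, not_lt.mpr hneg.le] using hsg
        simp [hι, hτ]; linarith
      · have hτ : τ g = w := by simp [hw, hendV, hpos]
        have hι : ι g ≠ w := by simpa [hstartV, hpos] using hsg
        simp [hι, hτ]; linarith
    have := Finset.sum_pos' hterm ⟨g, Finsupp.mem_support_iff.mpr hg, hgpos⟩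
    omega
  obtain ⟨f0, hf0⟩ : ∃ f, x f ≠ 0 := by
    by_contra h
    push_neg at h
    exact hx (Finsupp.ext fun f => h f)
  have : Finite {f // x f ≠ 0} := x.finite_support.to_subtype
  choose nxt hnxt hst using fun p : {f // x f ≠ 0} => key p.1 p.2
  set F : {f // x f ≠ 0} → {f // x f ≠ 0} := fun p => ⟨nxt p, hnxt p⟩ with hF
  set seq : ℕ → {f // x f ≠ 0} := fun k => F^[k] ⟨f0, hf0⟩ with hseq
  have hstep : ∀ k, startV (seq (k+1)).1 = endV (seq k).1 := by
    intro k
    have : seq (k+1) = F (seq k) := Function.iterate_succ_apply' F k _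
    rw [this]
    exact hst (seq k)
  obtain ⟨a, b, hab, heq⟩ := Finite.exists_ne_map_eq_of_infinite seq
  wlog hlt : a < b generalizing a b
  · exact this b a hab.symm heq.symm (by omega)
  refine ⟨b - a, fun k => (seq (a + k)).1, fun k => decide (0 < x (seq (a + k)).1),
    fun k => startV (seq (a + k)).1, ?_, ?_, ?_, ?_, ?_⟩
  · omega
  · dsimp only
    have : a + (b - a) = b := by omega
    rw [this, ← heq, Nat.add_zero]
  · intro i _
    dsimp only
    constructor
    · by_cases h : 0 < x (seq (a + i)).1 <;> simp [h, hstartV]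
    · have h2 := hstep (a + i)
      have h3 : a + i + 1 = a + (i + 1) := by omega
      rw [h3] at h2
      rw [h2]
      by_cases h : 0 < x (seq (a + i)).1 <;> simp [h, hendV]
  · intro i _ h
    dsimp only at h
    obtain ⟨he, hd⟩ := h
    rw [he] at hd
    simp at hd
  · intro h
    dsimp only at h
    obtain ⟨he, hd⟩ := h
    rw [he] at hd
    simp at hd

lemma exists_ker_of_circuit {n : ℕ} {e : ℕ → E} {d : ℕ → Bool} {v : ℕ → V}
    (h : IsCircuit ι τ n e d v) :
    ∃ c : E →₀ ℤ, c ≠ 0 ∧ boundaryMap ι τ c = 0 := by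
  classical
  have hex : ∃ m, ∃ e d v, IsCircuit ι τ m e d v := ⟨n, e, d, v, h⟩
  clear h
  obtain ⟨e, d, v, hc⟩ := Nat.find_spec hex
  have hmin : ∀ m < Nat.find hex, ¬∃ e d v, IsCircuit ι τ m e d v :=
    fun m hm => Nat.find_min hex hm
  set N := Nat.find hex with hN
  obtain ⟨hNpos, hclose, hsteps, hnb, hwrap⟩ := hc
  -- no oppositely-traversed pairs in a minimal circuit
  have nop' : ¬∃ g k, k + g + 1 < N ∧ e k = e (k + g + 1) ∧ d k = !d (k + g + 1) := by
    rintro hexg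
    obtain ⟨k, hkN, hke, hkd⟩ := Nat.find_spec hexg
    set g0 := Nat.find hexg with hg0
    have hming : ∀ m, m < g0 →
        ¬∃ k, k + m + 1 < N ∧ e k = e (k + m + 1) ∧ d k = !d (k + m + 1) :=
      fun m hm => Nat.find_min hexg hm
    have hdl : d (k + g0 + 1) = !d k := by
      revert hkd; cases d k <;> cases d (k + g0 + 1) <;> simp
    rcases Nat.eq_zero_or_pos g0 with hg | hgpos
    · rw [hg] at hke hdl
      exact hnb k (by omega) ⟨by rw [← hke], by rw [hdl]⟩
    -- derive v (k+g0+1) = v (k+1)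
    have hk' := hsteps k (by omega)
    have hl' := hsteps (k + g0 + 1) hkN
    rw [← hke, hdl] at hl'
    have hvl : v (k + g0 + 1) = v (k + 1) := by
      cases hdk : d k
      · rw [hdk] at hk' hl'; simp at hk' hl'
        rw [← hk'.2, ← hl'.1]
      · rw [hdk] at hk' hl'; simp at hk' hl'
        rw [← hk'.2, ← hl'.1]
    refine hmin g0 (by omega) ⟨fun t => e (k + 1 + t), fun t => d (k + 1 + t),
      fun t => v (k + 1 + t), hgpos, ?_, ?_, ?_, ?_⟩
    · dsimp only
      rw [show k + 1 + g0 = k + g0 + 1 by omega, hvl, Nat.add_zero]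
    · intro t ht
      dsimp only
      have hs := hsteps (k + 1 + t) (by omega)
      refine ⟨hs.1, ?_⟩
      rw [show k + 1 + (t + 1) = k + 1 + t + 1 by omega]
      exact hs.2
    · intro t ht hcon
      dsimp only at hcon
      rw [show k + 1 + (t + 1) = k + 1 + t + 1 by omega] at hcon
      exact hnb (k + 1 + t) (by omega) hcon
    · intro hcon
      dsimp only at hcon
      obtain ⟨he', hd'⟩ := hcon
      rcases Nat.eq_zero_or_pos (g0 - 1) with hg1 | hg1
      · rw [hg1, Nat.add_zero] at hd'
        simp at hd'
      · -- (k+1, k+g0) is an opposite pair with smaller gap g0 - 2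
        refine hming (g0 - 2) (by omega) ⟨k + 1, ?_, ?_, ?_⟩
        · omega
        · rw [show k + 1 + (g0 - 2) + 1 = k + 1 + (g0 - 1) by omega]
          rw [Nat.add_zero] at he'
          exact he'
        · rw [show k + 1 + (g0 - 2) + 1 = k + 1 + (g0 - 1) by omega]
          rw [Nat.add_zero] at hd'
          exact hd'
  have nop : ∀ k l, k < N → l < N → e k = e l → d k ≠ !d l := by
    intro k l hk hl he hd
    rcases Nat.lt_trichotomy k l with hkl | hkl | hkl
    · exact nop' ⟨l - k - 1, k, by omega, by rwa [show k + (l - k - 1) + 1 = l by omega],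
        by rwa [show k + (l - k - 1) + 1 = l by omega]⟩
    · rw [hkl] at hd; simp at hd
    · refine nop' ⟨k - l - 1, l, by omega, ?_, ?_⟩
      · rwa [show l + (k - l - 1) + 1 = k by omega, eq_comm]
      · rw [show l + (k - l - 1) + 1 = k by omega]
        revert hd; cases d k <;> cases d l <;> simp
  -- the signed cycle chain
  set s : ℕ → ℤ := fun k => if d k then 1 else -1 with hsdef
  set c : E →₀ ℤ := ∑ k ∈ Finset.range N, Finsupp.single (e k) (s k) with hcdef
  have hce : c (e 0) = ∑ k ∈ Finset.range N, (if e k = e 0 then s 0 else 0) := by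
    rw [hcdef, Finsupp.finset_sum_apply]
    refine Finset.sum_congr rfl fun k hk => ?_
    rw [Finsupp.single_apply]
    by_cases hek : e k = e 0
    · have hdk : d k = d 0 := by
        have := nop k 0 (Finset.mem_range.mp hk) hNpos hek
        revert this; cases d k <;> cases d 0 <;> simp
      simp [hek, hsdef, hdk]
    · simp [hek]
  have hcne : c (e 0) ≠ 0 := by
    rw [hce]
    cases hd0 : d 0
    · have hneg : ∑ k ∈ Finset.range N, (if e k = e 0 then s 0 else 0) < 0 := by
        rw [← neg_pos, ← Finset.sum_neg_distrib]
        exact Finset.sum_pos'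
          (fun k _ => by by_cases hek : e k = e 0 <;> simp [hek, hsdef, hd0])
          ⟨0, Finset.mem_range.mpr hNpos, by simp [hsdef, hd0]⟩
      omega
    · have hpos : 0 < ∑ k ∈ Finset.range N, (if e k = e 0 then s 0 else 0) :=
        Finset.sum_pos' (fun k _ => by by_cases hek : e k = e 0 <;> simp [hek, hsdef, hd0])
          ⟨0, Finset.mem_range.mpr hNpos, by simp [hsdef, hd0]⟩
      omega
  refine ⟨c, fun h => hcne (by rw [h]; rfl), ?_⟩
  have hb : boundaryMap ι τ c =
      ∑ k ∈ Finset.range N, (Finsupp.single (v (k + 1)) 1 - Finsupp.single (v k) 1) := by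
    rw [hcdef, map_sum]
    refine Finset.sum_congr rfl fun k hk => ?_
    rw [boundaryMap, Finsupp.linearCombination_single]
    obtain ⟨h1, h2⟩ := hsteps k (Finset.mem_range.mp hk)
    cases hdk : d k
    · rw [hdk] at h1 h2; simp at h1 h2
      rw [h1, h2]
      simp [hsdef, hdk, neg_sub]
    · rw [hdk] at h1 h2; simp at h1 h2
      rw [h1, h2]
      simp [hsdef, hdk]
  rw [hb, Finset.sum_range_sub (fun k => Finsupp.single (v k) 1), hclose, sub_self]

/-- For an `M`-graph (with `M`-equivariant incidence maps `ι, τ : E → V`), the graph is a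
forest (contains no cycle) if and only if the boundary map `∂ : ℤ[E] → ℤ[V]`,
`∂(e) = τ(e) − ι(e)`, is injective. -/
theorem forest_iff_boundary_injective
    (M : Type*) [Monoid M] [MulAction M V] [MulAction M E]
    (hι : ∀ (m : M) (e : E), ι (m • e) = m • ι e)
    (hτ : ∀ (m : M) (e : E), τ (m • e) = m • τ e) :
    (¬ ∃ (n : ℕ) (e : ℕ → E) (d : ℕ → Bool) (v : ℕ → V), IsCircuit ι τ n e d v) ↔
      Function.Injective (boundaryMap ι τ) := by
  constructor
  · intro hno x y hxy
    by_contra hne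
    have hx : x - y ≠ 0 := sub_ne_zero.mpr hne
    have h0 : boundaryMap ι τ (x - y) = 0 := by rw [map_sub, hxy, sub_self]
    exact hno (exists_circuit_of_ker ι τ (x - y) hx h0)
  · rintro hinj ⟨n, e, d, v, hc⟩
    obtain ⟨c, hc0, hbc⟩ := exists_ker_of_circuit ι τ hc
    exact hc0 (hinj (by rw [hbc, map_zero]))

end
end

section
/- Let G be a directed graph with vertex set V, and suppose ∂ : Z[E] → Z[V], ∂(e) = τ(e) − ι(e), admits a left inverse β : Z[V] → Z[E] (β ∘ ∂ = id) and G is connected. Then the sequence 0 → Z[E] → Z[V] → Z → 0 is exact, where the last map is the augmentation sending each vertex to 1; in particular G is a tree. -/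
section

variable {E V : Type*} (ι τ : E → V)

/-- The augmentation map `ε : ℤ[V] → ℤ` sending every vertex to `1`. -/
noncomputable def augmentation : (V →₀ ℤ) →ₗ[ℤ] ℤ :=
  Finsupp.linearCombination ℤ (fun _ : V => (1 : ℤ))

/-- Two vertices are adjacent if some edge joins them (in either direction). -/
def adjStep (v w : V) : Prop :=
  ∃ e : E, (ι e = v ∧ τ e = w) ∨ (ι e = w ∧ τ e = v)

lemma diff_mem_range {v w : V} (h : Relation.ReflTransGen (adjStep ι τ) v w) :
    Finsupp.single w (1 : ℤ) - Finsupp.single v 1 ∈ LinearMap.range (boundaryMap ι τ) := by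
  induction h with
  | refl => simp
  | @tail b c _ hbc ih =>
    have key : Finsupp.single c (1 : ℤ) - Finsupp.single v 1 =
        (Finsupp.single c (1 : ℤ) - Finsupp.single b 1) +
        (Finsupp.single b (1 : ℤ) - Finsupp.single v 1) := by abel
    rw [key]
    refine Submodule.add_mem _ ?_ ih
    obtain ⟨e, ⟨h1, h2⟩ | ⟨h1, h2⟩⟩ := hbc
    · exact ⟨Finsupp.single e 1, by simp [boundaryMap, h1, h2]⟩
    · refine ⟨-Finsupp.single e 1, ?_⟩
      rw [map_neg]
      simp [boundaryMap, h1, h2]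

/-- If the boundary map `∂ : ℤ[E] → ℤ[V]` of a connected directed graph admits a left
inverse `β` (`β ∘ ∂ = id`), then `0 → ℤ[E] → ℤ[V] → ℤ → 0` is exact, where the last map is
the augmentation; in particular the graph is a tree (connected with injective boundary map). -/
theorem exact_sequence_of_left_inverse
    [Nonempty V]
    (hconn : ∀ v w : V, Relation.ReflTransGen (adjStep ι τ) v w)
    (β : (V →₀ ℤ) →ₗ[ℤ] (E →₀ ℤ))
    (hβ : β.comp (boundaryMap ι τ) = LinearMap.id) :
    Function.Injective (boundaryMap ι τ) ∧
      LinearMap.range (boundaryMap ι τ) = LinearMap.ker (augmentation (V := V)) ∧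
      Function.Surjective (augmentation (V := V)) := by
  obtain ⟨v₀⟩ := ‹Nonempty V›
  refine ⟨?_, ?_, ?_⟩
  · intro x y h
    have hx := LinearMap.congr_fun hβ x
    have hy := LinearMap.congr_fun hβ y
    simp only [LinearMap.comp_apply, LinearMap.id_apply] at hx hy
    rw [← hx, ← hy, h]
  · ext x
    constructor
    · rintro ⟨y, rfl⟩
      have : (augmentation (V := V)).comp (boundaryMap ι τ) = 0 := by
        ext e
        simp [boundaryMap, augmentation]
      simpa [LinearMap.mem_ker] using LinearMap.congr_fun this y
    · intro hx
      have hx0 : augmentation (V := V) x = 0 := hx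
      have hx' : ∑ v ∈ x.support, x v = 0 := by
        simpa [augmentation, Finsupp.linearCombination_apply, Finsupp.sum] using hx0
      have hrep : x = ∑ v ∈ x.support,
          x v • (Finsupp.single v (1 : ℤ) - Finsupp.single v₀ 1) := by
        have h1 : ∑ v ∈ x.support, x v • (Finsupp.single v (1 : ℤ)) = x := by
          simp only [Finsupp.smul_single, smul_eq_mul, mul_one]
          conv_rhs => rw [← x.sum_single]
          rfl
        have h2 : ∑ v ∈ x.support, x v • (Finsupp.single v₀ (1 : ℤ)) =
            (0 : V →₀ ℤ) := by
          rw [← Finset.sum_smul, hx', zero_smul]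
        simp only [smul_sub, Finset.sum_sub_distrib, h1, h2, sub_zero]
      rw [hrep]
      exact Submodule.sum_mem _ fun v _ =>
        Submodule.smul_mem _ _ (diff_mem_range ι τ (hconn v₀ v))
  · intro n
    exact ⟨Finsupp.single v₀ n, by simp [augmentation]⟩

end
end
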